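/- Let C be a decomposition of the de Bruijn graph dB(n) into vertex-disjoint cycles covering all vertices, and let G = dB(n)/C be the quotient graph with an arc (X,Y) whenever there is a de Bruijn arc from a vertex of cycle X to a vertex of cycle Y. Then G is symmetric: (X,Y) is an arc of G if and only if (Y,X) is. -/

import Mathlib

/-- De Bruijn arc over alphabet `Σ'`: there are `a, b, u` with `f = au`, `g = ub`,
i.e. `g i = f (i+1)` for all `i < n - 1`. -/
def dBArc {α : Type*} (n : ℕ) (f g : Fin n → α) : Prop :=
  ∀ i : Fin n, (h : i.val + 1 < n) → g i = f ⟨i.val + 1, h⟩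

/-- A set `X` of vertices is a (directed) cycle of the de Bruijn graph: its elements can
be arranged cyclically, without repetition, with consecutive elements joined by arcs. -/
def IsDBCycle {α : Type*} (n : ℕ) (X : Set (Fin n → α)) : Prop :=
  ∃ m : ℕ, 0 < m ∧ ∃ c : ZMod m → (Fin n → α),
    Function.Injective c ∧ Set.range c = X ∧ ∀ i : ZMod m, dBArc n (c i) (c (i + 1))

/-- Arc relation of the quotient graph of the de Bruijn graph by a family of cycles. -/
def quotientArc {α : Type*} (n : ℕ) (X Y : Set (Fin n → α)) : Prop :=
  ∃ x ∈ X, ∃ y ∈ Y, dBArc n x y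

/-!
Let `σ` send each vertex to its successor on its cycle; it is an injective map of `Σⁿ`
along de Bruijn arcs that preserves every cycle. For a word `u ∈ Σⁿ⁻¹` the map `σ` sends
`{au | a ∈ Σ}` injectively into `{ub | b ∈ Σ}`, and both sets have `|Σ|` elements, so this is a
bijection. Given an arc `x → y` with `x = cu`, `y = ub`, write `y = σ w` with `w = au`; then
`w → σ x` is an arc, `w` lies on the cycle of `y` and `σ x` on the cycle of `x`.
-/

open Function

lemma dBArc_succ_iff {α : Type*} {k : ℕ} {f g : Fin (k + 1) → α} :
    dBArc (k + 1) f g ↔ Fin.tail f = Fin.init g := by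
  refine ⟨fun h => funext fun j => (h j.castSucc (by simp)).symm, fun h i hi => ?_⟩
  exact (congrFun h ⟨i, by omega⟩).symm

lemma IsDBCycle.exists_injective {α : Type*} {n : ℕ} {X : Set (Fin n → α)}
    (hX : IsDBCycle n X) :
    ∃ s : X → X, Injective s ∧ ∀ v : X, dBArc n (v : Fin n → α) (s v : Fin n → α) := by
  obtain ⟨m, -, c, hc, rfl, harc⟩ := hX
  let e : ZMod m ≃ Set.range c := Equiv.ofInjective c hc
  refine ⟨e ∘ (· + 1) ∘ e.symm, e.injective.comp ((add_left_injective 1).comp e.symm.injective),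
    fun v => ?_⟩
  simpa [e, Equiv.apply_ofInjective_symm] using harc (e.symm v)

lemma Set.PairwiseDisjoint.exists_injective_glue {V : Type*} {C : Set (Set V)}
    (hdisj : C.PairwiseDisjoint id) (hcover : ∀ v, ∃ X ∈ C, v ∈ X) {R : V → V → Prop}
    (hblock : ∀ X ∈ C, ∃ s : X → X, Injective s ∧ ∀ v : X, R v (s v)) :
    ∃ σ : V → V, Injective σ ∧ (∀ v, R v (σ v)) ∧ ∀ X ∈ C, Set.MapsTo σ X X := by
  choose b hbC hvb using hcover
  choose s hs hR using hblock
  let σ : V → V := fun v => s (b v) (hbC v) ⟨v, hvb v⟩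
  have hσ : ∀ X (hX : X ∈ C) (v : X), σ v = s X hX v := by
    rintro X hX ⟨v, hv⟩
    obtain rfl : X = b v := hdisj.elim_set hX (hbC v) v hv (hvb v)
    rfl
  refine ⟨σ, fun v w hvw => ?_, fun v => hR (b v) (hbC v) ⟨v, hvb v⟩, fun X hX v hv => ?_⟩
  · have hσv : σ v ∈ b v := (s _ _ _).2
    have hσw : σ w ∈ b w := (s _ _ _).2
    have hbw : b w = b v := hdisj.elim_set (hbC w) (hbC v) _ hσw (hvw ▸ hσv)
    have hw : w ∈ b v := hbw ▸ hvb w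
    rw [hσ (b v) (hbC v) ⟨v, hvb v⟩, hσ (b v) (hbC v) ⟨w, hw⟩] at hvw
    exact congrArg Subtype.val (hs _ _ (Subtype.ext hvw))
  · rw [hσ X hX ⟨v, hv⟩]
    exact (s X hX _).2

lemma exists_preimage_dBArc_of_injective {α : Type*} [Finite α] {n : ℕ}
    {σ : (Fin n → α) → (Fin n → α)} (hσ : Injective σ) (harc : ∀ v, dBArc n v (σ v))
    {x y : Fin n → α} (hxy : dBArc n x y) : ∃ w, σ w = y ∧ dBArc n w (σ x) := by
  cases n with
  | zero => exact ⟨y, Subsingleton.elim _ _, fun i => i.elim0⟩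
  | succ k =>
    set u := Fin.tail x
    have hsucc : ∀ a, Fin.snoc u (σ (Fin.cons a u) (Fin.last k)) = σ (Fin.cons a u) := by
      intro a
      have hinit : u = Fin.init (σ (Fin.cons a u)) := by
        simpa only [Fin.tail_cons] using dBArc_succ_iff.1 (harc (Fin.cons a u))
      have h := Fin.snoc_init_self (σ (Fin.cons a u))
      rwa [← hinit] at h
    have hτ : Injective fun a => σ (Fin.cons a u) (Fin.last k) := by
      intro a b (hab : σ (Fin.cons a u) (Fin.last k) = σ (Fin.cons b u) (Fin.last k))
      refine Fin.cons_left_injective u (hσ ?_)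
      rw [← hsucc a, ← hsucc b, hab]
    obtain ⟨a, ha : σ (Fin.cons a u) (Fin.last k) = y (Fin.last k)⟩ :=
      Finite.surjective_of_injective hτ (y (Fin.last k))
    refine ⟨Fin.cons a u, ?_, dBArc_succ_iff.2 ?_⟩
    · have hy : u = Fin.init y := dBArc_succ_iff.1 hxy
      rw [← hsucc a, ha, hy, Fin.snoc_init_self]
    · rw [Fin.tail_cons]
      exact dBArc_succ_iff.1 (harc x)

theorem quotient_graph_symmetric {α : Type*} [Fintype α] (n : ℕ)
    (C : Set (Set (Fin n → α)))
    (hcyc : ∀ X ∈ C, IsDBCycle n X)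
    (hdisj : ∀ X ∈ C, ∀ Y ∈ C, X ≠ Y → Disjoint X Y)
    (hcover : ∀ v : Fin n → α, ∃ X ∈ C, v ∈ X) :
    ∀ X ∈ C, ∀ Y ∈ C, (quotientArc n X Y ↔ quotientArc n Y X) := by
  have hdisj' : C.PairwiseDisjoint id := hdisj
  obtain ⟨σ, hσ, harc, hmaps⟩ :=
    hdisj'.exists_injective_glue hcover fun X hX => IsDBCycle.exists_injective (hcyc X hX)
  suffices h : ∀ X ∈ C, ∀ Y ∈ C, quotientArc n X Y → quotientArc n Y X from
    fun X hX Y hY => ⟨h X hX Y hY, h Y hY X hX⟩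
  rintro X hX Y hY ⟨x, hx, y, hy, hxy⟩
  obtain ⟨w, rfl, hw⟩ := exists_preimage_dBArc_of_injective hσ harc hxy
  obtain ⟨Z, hZ, hwZ⟩ := hcover w
  obtain rfl : Z = Y := hdisj'.elim_set hZ hY _ (hmaps Z hZ hwZ) hy
  exact ⟨w, hwZ, σ x, hmaps X hX hx, hw⟩
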